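/- arXiv:2404.04892 — 3 statements merged into one kernel-verified Lean document; each statement's English description precedes it below -/
import Mathlib

section
/- Let F be a finite family of contraction maps on a complete nonempty metric space X, and consider a graph-directed system: for k = 1,…,n, B_k = ⋃_{f ∈ F_k} f(B_{j(f,k)}) with each F_k ⊆ F nonempty. Then there exists a unique n-tuple of nonempty compact sets (B_1,…,B_n) satisfying all n equations simultaneously. -/
open EMetric Set TopologicalSpace Function

theorem gifs_attractor_exists_unique
    {X : Type*} [MetricSpace X] [CompleteSpace X] [Nonempty X]
    (F : Finset (X → X))
    (hF : ∀ f ∈ F, ∃ r : NNReal, ContractingWith r f)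
    (n : ℕ) (Fk : Fin n → Finset (X → X))
    (hsub : ∀ k, Fk k ⊆ F) (hne : ∀ k, (Fk k).Nonempty)
    (j : Fin n → (X → X) → Fin n) :
    ∃! B : Fin n → Set X,
      (∀ k, (B k).Nonempty ∧ IsCompact (B k)) ∧
      (∀ k, B k = ⋃ f ∈ Fk k, f '' B (j k f)) := by
  classical
  rcases Nat.eq_zero_or_pos n with rfl | hn
  · exact ⟨fun k => ∅, ⟨fun k => k.elim0, fun k => k.elim0⟩,
      fun B' _ => funext fun k => k.elim0⟩
  -- choose contraction ratios
  have hcontr : ∀ f ∈ F, ContractingWith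
      (if h : ∃ r : NNReal, ContractingWith r f then h.choose else 0) f := by
    intro f hf
    rw [dif_pos (hF f hf)]
    exact (hF f hf).choose_spec
  set ρ : (X → X) → NNReal :=
    fun f => if h : ∃ r : NNReal, ContractingWith r f then h.choose else 0 with hρ
  obtain ⟨f0, hf0⟩ := hne ⟨0, hn⟩
  have hFne : F.Nonempty := ⟨f0, hsub _ hf0⟩
  set r : NNReal := F.sup' hFne ρ with hr
  have hr1 : r < 1 := by
    rw [hr, Finset.sup'_lt_iff]
    exact fun f hf => (hcontr f hf).1
  have hρr : ∀ f ∈ F, ρ f ≤ r := fun f hf => Finset.le_sup' ρ hf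
  have hlip : ∀ f ∈ F, LipschitzWith (ρ f) f := fun f hf => (hcontr f hf).2
  -- the Hutchinson-type operator on n-tuples of nonempty compact sets
  set T : (Fin n → NonemptyCompacts X) → (Fin n → NonemptyCompacts X) :=
    fun B k =>
      ⟨⟨⋃ f ∈ Fk k, f '' (B (j k f) : Set X),
        (Fk k).isCompact_biUnion fun f hf =>
          (B (j k f)).isCompact.image (hlip f (hsub k hf)).continuous⟩,
        by
          obtain ⟨f, hf⟩ := hne k
          exact Set.Nonempty.mono (Set.subset_iUnion₂ f hf)
            ((B (j k f)).nonempty.image f)⟩ with hT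
  have hTcar : ∀ B k, ((T B k : Set X)) = ⋃ f ∈ Fk k, f '' (B (j k f) : Set X) :=
    fun B k => rfl
  -- the key estimate
  have key : ∀ (B B' : Fin n → NonemptyCompacts X) (k : Fin n),
      ∀ x ∈ (T B k : Set X), infEdist x (T B' k : Set X) ≤ (r : ENNReal) * edist B B' := by
    intro B B' k x hx
    rw [hTcar] at hx
    obtain ⟨f, hf, a, ha, rfl⟩ := by simpa using hx
    have hfF : f ∈ F := hsub k hf
    obtain ⟨b, hb, hab⟩ := (B' (j k f)).isCompact.exists_infEdist_eq_edist
      (B' (j k f)).nonempty a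
    calc infEdist (f a) (T B' k : Set X)
        ≤ infEdist (f a) (f '' (B' (j k f) : Set X)) :=
          infEdist_anti (by rw [hTcar]; exact Set.subset_iUnion₂ (s := fun g _ => g '' ((B' (j k g)) : Set X)) f hf)
      _ ≤ edist (f a) (f b) := infEdist_le_edist_of_mem (Set.mem_image_of_mem f hb)
      _ ≤ (ρ f : ENNReal) * edist a b := hlip f hfF a b
      _ = (ρ f : ENNReal) * infEdist a (B' (j k f) : Set X) := by rw [show infEdist a (B' (j k f) : Set X) = edist a b from hab]
      _ ≤ (r : ENNReal) * edist (B (j k f)) (B' (j k f)) := by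
          refine mul_le_mul' (ENNReal.coe_le_coe.2 (hρr f hfF)) ?_
          exact infEdist_le_hausdorffEdist_of_mem ha
      _ ≤ (r : ENNReal) * edist B B' :=
          mul_le_mul' le_rfl (edist_le_pi_edist B B' (j k f))
  have hTcontr : ContractingWith r T := by
    refine ⟨hr1, ?_⟩
    intro B B'
    rw [edist_pi_le_iff]
    intro k
    refine hausdorffEdist_le_of_infEdist (fun x hx => key B B' k x hx) fun y hy => ?_
    rw [edist_comm]
    exact key B' B k y hy
  haveI : Nonempty (NonemptyCompacts X) :=
    ⟨⟨⟨{Classical.arbitrary X}, isCompact_singleton⟩, Set.singleton_nonempty _⟩⟩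
  set B0 : Fin n → NonemptyCompacts X := ContractingWith.fixedPoint T hTcontr with hB0
  have hfix : IsFixedPt T B0 := ContractingWith.fixedPoint_isFixedPt hTcontr
  refine ⟨fun k => (B0 k : Set X), ⟨fun k => ⟨(B0 k).nonempty, (B0 k).isCompact⟩,
    fun k => ?_⟩, ?_⟩
  · conv_lhs => rw [← hfix]
    rfl
  · intro C hC
    set C' : Fin n → NonemptyCompacts X :=
      fun k => ⟨⟨C k, (hC.1 k).2⟩, (hC.1 k).1⟩ with hC'
    have hCfix : IsFixedPt T C' := by
      funext k
      ext x
      show x ∈ (T C' k : Set X) ↔ x ∈ C k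
      rw [hTcar]
      rw [(hC.2 k)]
      rfl
    have : C' = B0 := hTcontr.fixedPoint_unique' hCfix hfix
    funext k
    exact congrArg (fun D => (D k : Set X)) this
end

section
/- A self-similar set A ⊂ ℝ^d (the attractor of an IFS of contracting similitudes) with nonempty interior is regular-closed: the closure of the interior of A equals A. -/
open scoped RealInnerProductSpace

/-- A similitude of Euclidean space is an open map. -/
lemma similitude_isOpenMap (d : ℕ)
    (f : EuclideanSpace ℝ (Fin d) → EuclideanSpace ℝ (Fin d)) (r : ℝ) (hr : 0 < r)
    (h : ∀ x y, dist (f x) (f y) = r * dist x y) : IsOpenMap f := by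
  set g : EuclideanSpace ℝ (Fin d) → EuclideanSpace ℝ (Fin d) :=
    fun x => r⁻¹ • (f x - f 0) with hg
  have hnormfg : ∀ x y, ‖g x - g y‖ = ‖x - y‖ := by
    intro x y
    have h1 : g x - g y = r⁻¹ • (f x - f y) := by
      simp only [hg]
      rw [← smul_sub]
      congr 1
      abel
    have h2 : ‖f x - f y‖ = r * ‖x - y‖ := by
      rw [← dist_eq_norm, ← dist_eq_norm, h]
    rw [h1, norm_smul, h2, norm_inv, Real.norm_eq_abs, abs_of_pos hr]
    field_simp
  have hnorm : ∀ x, ‖g x‖ = ‖x‖ := by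
    intro x
    have := hnormfg x 0
    simpa [hg] using this
  have hip : ∀ x y, ⟪g x, g y⟫ = ⟪x, y⟫ := by
    intro x y
    have e1 := norm_sub_sq_real (g x) (g y)
    have e2 := norm_sub_sq_real x y
    rw [hnormfg, hnorm, hnorm] at e1
    linarith
  have hzero : ∀ u : EuclideanSpace ℝ (Fin d), ⟪u, u⟫ = 0 → u = 0 :=
    fun u hu => inner_self_eq_zero.mp hu
  have hadd : ∀ x y, g (x + y) = g x + g y := by
    intro x y
    have h0 : ⟪g (x + y) - g x - g y, g (x + y) - g x - g y⟫ = 0 := by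
      simp only [inner_sub_left, inner_sub_right, hip, inner_add_left, inner_add_right]
      ring
    have := hzero _ h0
    rwa [sub_sub, sub_eq_zero] at this
  have hsmul : ∀ (c : ℝ) x, g (c • x) = c • g x := by
    intro c x
    have h0 : ⟪g (c • x) - c • g x, g (c • x) - c • g x⟫ = 0 := by
      simp only [inner_sub_left, inner_sub_right, real_inner_smul_left, real_inner_smul_right,
        hip]
      ring
    have := hzero _ h0
    rwa [sub_eq_zero] at this
  let L : EuclideanSpace ℝ (Fin d) →ₗ[ℝ] EuclideanSpace ℝ (Fin d) :=
    { toFun := g, map_add' := hadd, map_smul' := hsmul }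
  let LI : EuclideanSpace ℝ (Fin d) →ₗᵢ[ℝ] EuclideanSpace ℝ (Fin d) := ⟨L, hnorm⟩
  let e := LI.toLinearIsometryEquiv rfl
  have hge : (g : EuclideanSpace ℝ (Fin d) → EuclideanSpace ℝ (Fin d)) = ⇑e := rfl
  have hf : f = (fun y => f 0 + y) ∘ (fun y : EuclideanSpace ℝ (Fin d) => r • y) ∘ g := by
    funext x
    simp only [Function.comp_apply, hg]
    rw [smul_inv_smul₀ hr.ne']
    abel
  rw [hf]
  refine (Homeomorph.addLeft (f 0)).isOpenMap.comp ((isOpenMap_smul₀ hr.ne').comp ?_)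
  rw [hge]
  exact e.toHomeomorph.isOpenMap

theorem self_similar_set_regular_closed
    (d m : ℕ) (hm : 0 < m)
    (F : Fin m → (EuclideanSpace ℝ (Fin d) → EuclideanSpace ℝ (Fin d)))
    (hsim : ∀ i, ∃ r : ℝ, 0 < r ∧ r < 1 ∧
      ∀ x y, dist (F i x) (F i y) = r * dist x y)
    (A : Set (EuclideanSpace ℝ (Fin d)))
    (hA : A.Nonempty) (hAc : IsCompact A)
    (hinv : A = ⋃ i, F i '' A)
    (hint : (interior A).Nonempty) :
    closure (interior A) = A := by
  choose r hr0 hr1 hdist using hsim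
  haveI : Nonempty (Fin m) := ⟨⟨0, hm⟩⟩
  set R : ℝ := Finset.univ.sup' Finset.univ_nonempty r with hR
  have hRi : ∀ i, r i ≤ R := fun i => Finset.le_sup' r (Finset.mem_univ i)
  have hR0 : 0 < R := lt_of_lt_of_le (hr0 (Classical.arbitrary _)) (hRi _)
  have hR1 : R < 1 := by
    rw [hR, Finset.sup'_lt_iff]
    intro i _; exact hr1 i
  have hFopen : ∀ i, IsOpenMap (F i) :=
    fun i => similitude_isOpenMap d (F i) (r i) (hr0 i) (hdist i)
  have hFA : ∀ i, F i '' A ⊆ A := by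
    intro i
    conv_rhs => rw [hinv]
    exact Set.subset_iUnion (fun j => F j '' A) i
  -- key iteration claim
  have key : ∀ n : ℕ, ∀ x ∈ A, ∃ (g : EuclideanSpace ℝ (Fin d) → EuclideanSpace ℝ (Fin d))
      (s : ℝ), 0 < s ∧ s ≤ R ^ n ∧
      (∀ a b, dist (g a) (g b) = s * dist a b) ∧ g '' A ⊆ A ∧ IsOpenMap g ∧ x ∈ g '' A := by
    intro n
    induction n with
    | zero =>
      intro x hx
      exact ⟨id, 1, one_pos, by norm_num, by simp, by simp, IsOpenMap.id, ⟨x, hx, rfl⟩⟩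
    | succ n ih =>
      intro x hx
      rw [hinv] at hx
      obtain ⟨i, y, hyA, hyx⟩ := by simpa using hx
      obtain ⟨g, s, hs0, hsR, hgd, hgA, hgo, a, haA, hay⟩ := ih y hyA
      refine ⟨F i ∘ g, r i * s, mul_pos (hr0 i) hs0, ?_, ?_, ?_, (hFopen i).comp hgo,
        a, haA, by simp [hay, hyx]⟩
      · rw [pow_succ, mul_comm (R ^ n) R]
        exact mul_le_mul (hRi i) hsR hs0.le hR0.le
      · intro a b
        simp [Function.comp, hdist i, hgd, mul_assoc]
      · rw [Set.image_comp]
        exact (Set.image_mono (f := F i) hgA).trans (hFA i)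
  -- bound on A
  obtain ⟨D, hD⟩ := Metric.isBounded_iff.mp hAc.isBounded
  set D' : ℝ := max D 1 with hD'
  have hD'0 : (0:ℝ) < D' := lt_of_lt_of_le one_pos (le_max_right _ _)
  obtain ⟨c, hc⟩ := hint
  refine Set.Subset.antisymm (closure_minimal interior_subset hAc.isClosed) ?_
  intro x hx
  rw [Metric.mem_closure_iff]
  intro ε hε
  have htend : Filter.Tendsto (fun n : ℕ => R ^ n) Filter.atTop (nhds 0) :=
    tendsto_pow_atTop_nhds_zero_of_lt_one hR0.le hR1
  obtain ⟨n, hn⟩ := (htend.eventually (gt_mem_nhds (show (0:ℝ) < ε / D' by positivity))).exists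
  obtain ⟨g, s, hs0, hsR, hgd, hgA, hgo, a, haA, hax⟩ := key n x hx
  refine ⟨g c, ?_, ?_⟩
  · have hging : g '' interior A ⊆ interior A := by
      apply interior_maximal
      · exact (Set.image_mono (f := g) interior_subset).trans hgA
      · exact hgo _ isOpen_interior
    exact hging ⟨c, hc, rfl⟩
  · have hcA : c ∈ A := interior_subset hc
    calc dist x (g c) = dist (g a) (g c) := by rw [← hax]
      _ = s * dist a c := hgd a c
      _ ≤ R ^ n * D' := by
          apply mul_le_mul hsR ((hD haA hcA).trans (le_max_left _ _)) dist_nonneg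
          positivity
      _ < ε := by
          rw [← lt_div_iff₀ hD'0]
          exact hn
end

section
/- The attractor of the IFS f_k(z) = z/2 + ω^{k−1} (k = 1,…,6) on ℂ, where ω = (1+i√3)/2, contains the regular hexagon H with vertices 2ω^{k−1}, k = 1,…,6; in fact the hexagon H = convex hull of {2ω^{k−1}} satisfies H = ⋃_{k=1}^6 f_k(H), so H is the attractor. -/
open EMetric Set

namespace HexAux

noncomputable def X (z : ℂ) : ℝ := z.re - z.im / Real.sqrt 3
noncomputable def Y (z : ℂ) : ℝ := 2 * z.im / Real.sqrt 3

lemma s3_pos : (0:ℝ) < Real.sqrt 3 := Real.sqrt_pos.2 (by norm_num)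
lemma s3_ne : (Real.sqrt 3 : ℝ) ≠ 0 := ne_of_gt s3_pos

def K : Set ℂ := {z | |X z| ≤ 2 ∧ |Y z| ≤ 2 ∧ |X z + Y z| ≤ 2}

lemma X_smul_add (a b : ℂ) (r t : ℝ) : X (r • a + t • b) = r * X a + t * X b := by
  simp only [X, Complex.real_smul, Complex.add_re, Complex.add_im, Complex.mul_re,
    Complex.mul_im, Complex.ofReal_re, Complex.ofReal_im]
  ring

lemma Y_smul_add (a b : ℂ) (r t : ℝ) : Y (r • a + t • b) = r * Y a + t * Y b := by
  simp only [Y, Complex.real_smul, Complex.add_re, Complex.add_im, Complex.mul_re,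
    Complex.mul_im, Complex.ofReal_re, Complex.ofReal_im]
  ring

lemma K_convex : Convex ℝ K := by
  intro z hz w hw a b ha hb hab
  obtain ⟨h1, h2, h3⟩ := hz
  obtain ⟨g1, g2, g3⟩ := hw
  rw [abs_le] at h1 h2 h3 g1 g2 g3
  refine ⟨?_, ?_, ?_⟩ <;> rw [abs_le] <;>
    simp only [X_smul_add, Y_smul_add] <;> constructor <;> nlinarith

lemma X_aff (z w : ℂ) : X (2*z - 2*w) = 2 * X z - 2 * X w := by
  simp only [X, Complex.sub_re, Complex.sub_im, Complex.mul_re, Complex.mul_im,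
    Complex.re_ofNat, Complex.im_ofNat]
  ring

lemma Y_aff (z w : ℂ) : Y (2*z - 2*w) = 2 * Y z - 2 * Y w := by
  simp only [Y, Complex.sub_re, Complex.sub_im, Complex.mul_re, Complex.mul_im,
    Complex.re_ofNat, Complex.im_ofNat]
  ring

lemma X_two (z : ℂ) : X (2*z) = 2 * X z := by
  have := X_aff z 0
  simpa [X] using this

lemma Y_two (z : ℂ) : Y (2*z) = 2 * Y z := by
  have := Y_aff z 0
  simpa [Y] using this

lemma sum_eval (ω : ℂ) (hω2 : ω^2 = ω - 1) (hω3 : ω^3 = -1) (w : Fin 6 → ℝ) :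
    ∑ i : Fin 6, w i • (2 * ω ^ (i:ℕ)) =
      ((2*(w 0 - w 2 - w 3 + w 5) : ℝ) : ℂ) + ((2*(w 1 + w 2 - w 4 - w 5) : ℝ) : ℂ) * ω := by
  simp only [Fin.sum_univ_six, Complex.real_smul,
    show ((0:Fin 6):ℕ) = 0 from rfl, show ((1:Fin 6):ℕ) = 1 from rfl,
    show ((2:Fin 6):ℕ) = 2 from rfl, show ((3:Fin 6):ℕ) = 3 from rfl,
    show ((4:Fin 6):ℕ) = 4 from rfl, show ((5:Fin 6):ℕ) = 5 from rfl]
  push_cast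
  linear_combination ((2:ℂ)*(w 2) - 2*(w 5)) * hω2 +
    ((2:ℂ)*(w 3) + 2*(w 4)*ω + 2*(w 5)*ω^2) * hω3

lemma combo_mem (v : Fin 6 → ℂ) (w : Fin 6 → ℝ) (h0 : ∀ i, 0 ≤ w i)
    (h1 : ∑ i, w i = 1) : (∑ i : Fin 6, w i • v i) ∈ convexHull ℝ (Set.range v) := by
  have := Finset.centerMass_mem_convexHull Finset.univ (fun i _ => h0 i)
    (by rw [h1]; norm_num) (fun i _ => Set.mem_range_self (f := v) i)
  rwa [Finset.centerMass_eq_of_sum_1 _ _ h1] at this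

lemma combo_mem' (ω : ℂ) (hω2 : ω^2 = ω - 1) (hω3 : ω^3 = -1)
    (a0 a1 a2 a3 a4 a5 : ℝ) (h0 : 0 ≤ a0) (h1 : 0 ≤ a1) (h2 : 0 ≤ a2)
    (h3 : 0 ≤ a3) (h4 : 0 ≤ a4) (h5 : 0 ≤ a5) (hs : a0+a1+a2+a3+a4+a5 = 1) :
    ((2*(a0 - a2 - a3 + a5) : ℝ) : ℂ) + ((2*(a1 + a2 - a4 - a5) : ℝ) : ℂ) * ω
      ∈ convexHull ℝ (Set.range fun k : Fin 6 => 2 * ω ^ (k:ℕ)) := by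
  have := combo_mem (fun k : Fin 6 => 2 * ω ^ (k:ℕ)) ![a0,a1,a2,a3,a4,a5]
    (by intro i; fin_cases i <;> simpa)
    (by
      simp only [Fin.sum_univ_six,
        show (![a0,a1,a2,a3,a4,a5] : Fin 6 → ℝ) 0 = a0 from rfl,
        show (![a0,a1,a2,a3,a4,a5] : Fin 6 → ℝ) 1 = a1 from rfl,
        show (![a0,a1,a2,a3,a4,a5] : Fin 6 → ℝ) 2 = a2 from rfl,
        show (![a0,a1,a2,a3,a4,a5] : Fin 6 → ℝ) 3 = a3 from rfl,
        show (![a0,a1,a2,a3,a4,a5] : Fin 6 → ℝ) 4 = a4 from rfl,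
        show (![a0,a1,a2,a3,a4,a5] : Fin 6 → ℝ) 5 = a5 from rfl]
      linarith)
  rw [sum_eval ω hω2 hω3] at this
  simpa only [show (![a0,a1,a2,a3,a4,a5] : Fin 6 → ℝ) 0 = a0 from rfl,
    show (![a0,a1,a2,a3,a4,a5] : Fin 6 → ℝ) 1 = a1 from rfl,
    show (![a0,a1,a2,a3,a4,a5] : Fin 6 → ℝ) 2 = a2 from rfl,
    show (![a0,a1,a2,a3,a4,a5] : Fin 6 → ℝ) 3 = a3 from rfl,
    show (![a0,a1,a2,a3,a4,a5] : Fin 6 → ℝ) 4 = a4 from rfl,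
    show (![a0,a1,a2,a3,a4,a5] : Fin 6 → ℝ) 5 = a5 from rfl] using this

lemma half_edist (c z w : ℂ) : edist (z/2 + c) (w/2 + c) = edist z w / 2 := by
  rw [edist_add_right, edist_nndist, nndist_eq_nnnorm, edist_nndist, nndist_eq_nnnorm,
    show z/2 - w/2 = (z - w)/2 by ring, nnnorm_div]
  rw [ENNReal.coe_div (by simp : ‖(2:ℂ)‖₊ ≠ 0)]
  norm_num

end HexAux
theorem hexagon_is_attractor
    (ω : ℂ) (hω : ω = (1 + Complex.I * Real.sqrt 3) / 2) :
    (convexHull ℝ (Set.range fun k : Fin 6 => 2 * ω ^ (k : ℕ))) =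
      ⋃ k : Fin 6, (fun z : ℂ => z / 2 + ω ^ (k : ℕ)) ''
        (convexHull ℝ (Set.range fun k : Fin 6 => 2 * ω ^ (k : ℕ))) ∧
    ∀ A : Set ℂ, A.Nonempty → IsCompact A →
      (A = ⋃ k : Fin 6, (fun z : ℂ => z / 2 + ω ^ (k : ℕ)) '' A) →
      A = convexHull ℝ (Set.range fun k : Fin 6 => 2 * ω ^ (k : ℕ)) := by
  have hsC : ((Real.sqrt 3 : ℝ) : ℂ) ^ 2 = 3 := by
    norm_cast
    rw [Real.sq_sqrt] <;> norm_num
  have hω2 : ω ^ 2 = ω - 1 := by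
    rw [hω]; linear_combination (Complex.I ^ 2 / 4) * hsC + (3 / 4) * Complex.I_sq
  have hω3 : ω ^ 3 = -1 := by linear_combination (ω + 1) * hω2
  have hω4 : ω ^ 4 = -ω := by linear_combination ω * hω3
  have hω5 : ω ^ 5 = 1 - ω := by linear_combination ω ^ 2 * hω3 - hω2
  have hω' : ω = ((1 / 2 : ℝ) : ℂ) + ((Real.sqrt 3 / 2 : ℝ) : ℂ) * Complex.I := by
    rw [hω]; push_cast; ring
  have hre : ω.re = 1 / 2 := by rw [hω']; simp
  have him : ω.im = Real.sqrt 3 / 2 := by rw [hω']; simp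
  have s3ne := HexAux.s3_ne
  have e0 : HexAux.X (ω ^ (0 : ℕ)) = 1 ∧ HexAux.Y (ω ^ (0 : ℕ)) = 0 := by
    norm_num [HexAux.X, HexAux.Y]
  have e1 : HexAux.X (ω ^ (1 : ℕ)) = 0 ∧ HexAux.Y (ω ^ (1 : ℕ)) = 1 := by
    rw [pow_one]
    constructor
    · simp only [HexAux.X, hre, him]; field_simp; ring
    · simp only [HexAux.Y, him]; field_simp
  have e2 : HexAux.X (ω ^ (2 : ℕ)) = -1 ∧ HexAux.Y (ω ^ (2 : ℕ)) = 1 := by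
    rw [hω2]
    constructor
    · simp only [HexAux.X, Complex.sub_re, Complex.sub_im, Complex.one_re, Complex.one_im,
        hre, him]
      field_simp
      ring
    · simp only [HexAux.Y, Complex.sub_im, Complex.one_im, him]; field_simp; ring
  have e3 : HexAux.X (ω ^ (3 : ℕ)) = -1 ∧ HexAux.Y (ω ^ (3 : ℕ)) = 0 := by
    rw [hω3]
    norm_num [HexAux.X, HexAux.Y]
  have e4 : HexAux.X (ω ^ (4 : ℕ)) = 0 ∧ HexAux.Y (ω ^ (4 : ℕ)) = -1 := by
    rw [hω4]
    constructor
    · simp only [HexAux.X, Complex.neg_re, Complex.neg_im, hre, him]; field_simp; ring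
    · simp only [HexAux.Y, Complex.neg_im, him]; field_simp
  have e5 : HexAux.X (ω ^ (5 : ℕ)) = 1 ∧ HexAux.Y (ω ^ (5 : ℕ)) = -1 := by
    rw [hω5]
    constructor
    · simp only [HexAux.X, Complex.sub_re, Complex.sub_im, Complex.one_re, Complex.one_im,
        hre, him]
      field_simp
      ring
    · simp only [HexAux.Y, Complex.sub_im, Complex.one_im, him]; field_simp; ring
  set H := convexHull ℝ (Set.range fun k : Fin 6 => 2 * ω ^ (k : ℕ)) with hHdef
  have vmem : ∀ (u : ℂ) (a b : ℝ), HexAux.X u = a → HexAux.Y u = b →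
      |a| ≤ 1 → |b| ≤ 1 → |a + b| ≤ 1 → (2 * u) ∈ HexAux.K := by
    intro u a b hXu hYu h1 h2 h3
    rw [abs_le] at h1 h2 h3
    refine ⟨?_, ?_, ?_⟩
    · rw [HexAux.X_two, hXu, abs_le]; constructor <;> linarith
    · rw [HexAux.Y_two, hYu, abs_le]; constructor <;> linarith
    · rw [HexAux.X_two, HexAux.Y_two, hXu, hYu, abs_le]; constructor <;> linarith
  have hVK : ∀ k : Fin 6, (2 * ω ^ (k : ℕ)) ∈ HexAux.K := by
    intro k
    fin_cases k
    · exact vmem _ 1 0 e0.1 e0.2 (by norm_num) (by norm_num) (by norm_num)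
    · exact vmem _ 0 1 e1.1 e1.2 (by norm_num) (by norm_num) (by norm_num)
    · exact vmem _ (-1) 1 e2.1 e2.2 (by norm_num) (by norm_num) (by norm_num)
    · exact vmem _ (-1) 0 e3.1 e3.2 (by norm_num) (by norm_num) (by norm_num)
    · exact vmem _ 0 (-1) e4.1 e4.2 (by norm_num) (by norm_num) (by norm_num)
    · exact vmem _ 1 (-1) e5.1 e5.2 (by norm_num) (by norm_num) (by norm_num)
  have HsubK : H ⊆ HexAux.K := by
    rw [hHdef]
    refine convexHull_min ?_ HexAux.K_convex
    rintro _ ⟨k, rfl⟩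
    exact hVK k
  have key : ∀ (z : ℂ) (a0 a1 a2 a3 a4 a5 : ℝ), 0 ≤ a0 → 0 ≤ a1 → 0 ≤ a2 → 0 ≤ a3 →
      0 ≤ a4 → 0 ≤ a5 → a0 + a1 + a2 + a3 + a4 + a5 = 1 →
      z = ((2 * (a0 - a2 - a3 + a5) : ℝ) : ℂ) + ((2 * (a1 + a2 - a4 - a5) : ℝ) : ℂ) * ω →
      z ∈ H := by
    intro z a0 a1 a2 a3 a4 a5 h0 h1 h2 h3 h4 h5 hs hz
    rw [hz, hHdef]
    exact HexAux.combo_mem' ω hω2 hω3 a0 a1 a2 a3 a4 a5 h0 h1 h2 h3 h4 h5 hs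
  have hexpand : ∀ z : ℂ, z = ((HexAux.X z : ℝ) : ℂ) + ((HexAux.Y z : ℝ) : ℂ) * ω := by
    intro z
    apply Complex.ext <;>
      simp only [HexAux.X, HexAux.Y, Complex.add_re, Complex.add_im, Complex.mul_re,
        Complex.mul_im, Complex.ofReal_re, Complex.ofReal_im, hre, him] <;>
      field_simp <;> ring
  have KsubH : HexAux.K ⊆ H := by
    intro z hz
    obtain ⟨h1, h2, h3⟩ := hz
    rw [abs_le] at h1 h2 h3
    have hz' := hexpand z
    set x := HexAux.X z with hxdef
    set y := HexAux.Y z with hydef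
    rcases le_total 0 x with hx0 | hx0 <;> rcases le_total 0 y with hy0 | hy0
    · exact key z (x/2 + (1 - x/2 - y/2)/2) (y/2) 0 ((1 - x/2 - y/2)/2) 0 0
        (by linarith) (by linarith) le_rfl (by linarith) le_rfl le_rfl (by ring)
        (by rw [hz']; push_cast; ring)
    · rcases le_total 0 (x + y) with hs0 | hs0
      · exact key z ((x+y)/2 + (1 - x/2)/2) 0 0 ((1 - x/2)/2) 0 (-y/2)
          (by linarith) le_rfl le_rfl (by linarith) le_rfl (by linarith) (by ring)
          (by rw [hz']; push_cast; ring)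
      · exact key z ((1 + y/2)/2) 0 0 ((1 + y/2)/2) (-(x+y)/2) (x/2)
          (by linarith) le_rfl le_rfl (by linarith) (by linarith) (by linarith) (by ring)
          (by rw [hz']; push_cast; ring)
    · rcases le_total 0 (x + y) with hs0 | hs0
      · exact key z ((1 - y/2)/2) ((x+y)/2) (-x/2) ((1 - y/2)/2) 0 0
          (by linarith) (by linarith) (by linarith) (by linarith) le_rfl le_rfl (by ring)
          (by rw [hz']; push_cast; ring)
      · exact key z ((1 + x/2)/2) 0 (y/2) (-(x+y)/2 + (1 + x/2)/2) 0 0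
          (by linarith) le_rfl (by linarith) (by linarith) le_rfl le_rfl (by ring)
          (by rw [hz']; push_cast; ring)
    · exact key z ((1 + x/2 + y/2)/2) 0 0 (-x/2 + (1 + x/2 + y/2)/2) (-y/2) 0
        (by linarith) le_rfl le_rfl (by linarith) (by linarith) le_rfl (by ring)
        (by rw [hz']; push_cast; ring)
  have part1 : H = ⋃ k : Fin 6, (fun z : ℂ => z / 2 + ω ^ (k : ℕ)) '' H := by
    apply Set.Subset.antisymm
    · intro z hzH
      obtain ⟨h1, h2, h3⟩ := HsubK hzH
      rw [abs_le] at h1 h2 h3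
      have memf : ∀ k : Fin 6, (2 * z - 2 * ω ^ (k : ℕ)) ∈ H →
          z ∈ ⋃ k : Fin 6, (fun z : ℂ => z / 2 + ω ^ (k : ℕ)) '' H := by
        intro k hk
        exact Set.mem_iUnion.2 ⟨k, ⟨2 * z - 2 * ω ^ (k : ℕ), hk, by ring⟩⟩
      have cov : ∀ (k : Fin 6) (a b : ℝ), HexAux.X (ω ^ (k : ℕ)) = a →
          HexAux.Y (ω ^ (k : ℕ)) = b →
          |2 * HexAux.X z - 2 * a| ≤ 2 → |2 * HexAux.Y z - 2 * b| ≤ 2 →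
          |(2 * HexAux.X z - 2 * a) + (2 * HexAux.Y z - 2 * b)| ≤ 2 →
          z ∈ ⋃ k : Fin 6, (fun z : ℂ => z / 2 + ω ^ (k : ℕ)) '' H := by
        intro k a b ha hb c1 c2 c3
        refine memf k (KsubH ⟨?_, ?_, ?_⟩)
        · rw [HexAux.X_aff, ha]; exact c1
        · rw [HexAux.Y_aff, hb]; exact c2
        · rw [HexAux.X_aff, HexAux.Y_aff, ha, hb]; exact c3
      set x := HexAux.X z with hxdef
      set y := HexAux.Y z with hydef
      rcases le_total 0 x with hx0 | hx0 <;> rcases le_total 0 y with hy0 | hy0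
      · rcases le_total y x with hc | hc
        · exact cov 0 1 0 e0.1 e0.2 (by rw [abs_le]; constructor <;> linarith)
            (by rw [abs_le]; constructor <;> linarith)
            (by rw [abs_le]; constructor <;> linarith)
        · exact cov 1 0 1 e1.1 e1.2 (by rw [abs_le]; constructor <;> linarith)
            (by rw [abs_le]; constructor <;> linarith)
            (by rw [abs_le]; constructor <;> linarith)
      · rcases le_total 1 (x + y) with hs0 | hs0
        · exact cov 0 1 0 e0.1 e0.2 (by rw [abs_le]; constructor <;> linarith)
            (by rw [abs_le]; constructor <;> linarith)
            (by rw [abs_le]; constructor <;> linarith)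
        · rcases le_total (x + y) (-1) with hs1 | hs1
          · exact cov 4 0 (-1) e4.1 e4.2 (by rw [abs_le]; constructor <;> linarith)
              (by rw [abs_le]; constructor <;> linarith)
              (by rw [abs_le]; constructor <;> linarith)
          · exact cov 5 1 (-1) e5.1 e5.2 (by rw [abs_le]; constructor <;> linarith)
              (by rw [abs_le]; constructor <;> linarith)
              (by rw [abs_le]; constructor <;> linarith)
      · rcases le_total 1 (x + y) with hs0 | hs0
        · exact cov 1 0 1 e1.1 e1.2 (by rw [abs_le]; constructor <;> linarith)
            (by rw [abs_le]; constructor <;> linarith)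
            (by rw [abs_le]; constructor <;> linarith)
        · rcases le_total (x + y) (-1) with hs1 | hs1
          · exact cov 3 (-1) 0 e3.1 e3.2 (by rw [abs_le]; constructor <;> linarith)
              (by rw [abs_le]; constructor <;> linarith)
              (by rw [abs_le]; constructor <;> linarith)
          · exact cov 2 (-1) 1 e2.1 e2.2 (by rw [abs_le]; constructor <;> linarith)
              (by rw [abs_le]; constructor <;> linarith)
              (by rw [abs_le]; constructor <;> linarith)
      · rcases le_total x y with hc | hc
        · exact cov 3 (-1) 0 e3.1 e3.2 (by rw [abs_le]; constructor <;> linarith)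
            (by rw [abs_le]; constructor <;> linarith)
            (by rw [abs_le]; constructor <;> linarith)
        · exact cov 4 0 (-1) e4.1 e4.2 (by rw [abs_le]; constructor <;> linarith)
            (by rw [abs_le]; constructor <;> linarith)
            (by rw [abs_le]; constructor <;> linarith)
    · intro z hz
      rw [Set.mem_iUnion] at hz
      obtain ⟨k, w, hwH, rfl⟩ := hz
      have hvH : (2 * ω ^ (k : ℕ)) ∈ H := by
        rw [hHdef]; exact subset_convexHull ℝ _ ⟨k, rfl⟩
      have := (convex_convexHull ℝ _) hwH hvH
        (by norm_num : (0:ℝ) ≤ 1/2) (by norm_num : (0:ℝ) ≤ 1/2) (by norm_num)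
      rw [show ((1:ℝ)/2) • w + ((1:ℝ)/2) • (2 * ω ^ (k : ℕ)) = w / 2 + ω ^ (k : ℕ) by
        simp [Complex.real_smul]; push_cast; ring] at this
      exact this
  refine ⟨part1, ?_⟩
  intro A hAne hAcomp hAfix
  have hHne : H.Nonempty := ⟨2 * ω ^ ((0 : Fin 6) : ℕ), by
    rw [hHdef]; exact subset_convexHull ℝ _ ⟨0, rfl⟩⟩
  have hHcomp : IsCompact H := (Set.finite_range _).isCompact_convexHull ℝ
  have step : ∀ S T : Set ℂ, T.Nonempty → IsCompact T →
      ∀ x ∈ ⋃ k : Fin 6, (fun z : ℂ => z / 2 + ω ^ (k : ℕ)) '' S,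
        EMetric.infEdist x (⋃ k : Fin 6, (fun z : ℂ => z / 2 + ω ^ (k : ℕ)) '' T) ≤
          EMetric.hausdorffEdist S T / 2 := by
    intro S T hTne hTc x hx
    rw [Set.mem_iUnion] at hx
    obtain ⟨k, a, haS, rfl⟩ := hx
    obtain ⟨h, hhT, hmin⟩ := hTc.exists_infEdist_eq_edist hTne a
    calc EMetric.infEdist ((fun z : ℂ => z / 2 + ω ^ (k : ℕ)) a)
          (⋃ k : Fin 6, (fun z : ℂ => z / 2 + ω ^ (k : ℕ)) '' T)
        ≤ EMetric.infEdist (a / 2 + ω ^ (k : ℕ)) ((fun z : ℂ => z / 2 + ω ^ (k : ℕ)) '' T) :=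
          EMetric.infEdist_anti (Set.subset_iUnion
            (fun k : Fin 6 => (fun z : ℂ => z / 2 + ω ^ (k : ℕ)) '' T) k)
      _ ≤ edist (a / 2 + ω ^ (k : ℕ)) (h / 2 + ω ^ (k : ℕ)) :=
          EMetric.infEdist_le_edist_of_mem ⟨h, hhT, rfl⟩
      _ = edist a h / 2 := HexAux.half_edist _ a h
      _ = EMetric.infEdist a T / 2 := (congrArg (· / 2) hmin).symm
      _ ≤ EMetric.hausdorffEdist S T / 2 :=
          ENNReal.div_le_div_right (EMetric.infEdist_le_hausdorffEdist_of_mem haS) 2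
  have hd : EMetric.hausdorffEdist A H ≤ EMetric.hausdorffEdist A H / 2 := by
    have heq : EMetric.hausdorffEdist A H =
        EMetric.hausdorffEdist (⋃ k : Fin 6, (fun z : ℂ => z / 2 + ω ^ (k : ℕ)) '' A)
          (⋃ k : Fin 6, (fun z : ℂ => z / 2 + ω ^ (k : ℕ)) '' H) := by
      rw [← hAfix, ← part1]
    rw [heq]
    refine le_trans (EMetric.hausdorffEdist_le_of_infEdist
      (fun x hx => step A H hHne hHcomp x hx)
      (fun x hx => by
        have := step H A hAne hAcomp x hx
        rwa [show EMetric.hausdorffEdist H A = EMetric.hausdorffEdist A H from EMetric.hausdorffEdist_comm] at this)) ?_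
    rw [← heq]
  have hfin : EMetric.hausdorffEdist A H ≠ ⊤ :=
    Metric.hausdorffEdist_ne_top_of_nonempty_of_bounded hAne hHne
      hAcomp.isBounded hHcomp.isBounded
  have h0 : EMetric.hausdorffEdist A H = 0 := by
    by_contra hne
    exact absurd hd (not_le.2 (ENNReal.half_lt_self hne hfin))
  exact (EMetric.hausdorffEdist_zero_iff_eq_of_closed hAcomp.isClosed hHcomp.isClosed).1 h0
end
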